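/- If the polynomial hierarchy PH collapses to P^NP, then for every positive integer k there is a language L ∈ P^NP with L ∉ i.o.SIZE[n^k], i.e., L cannot be computed by circuits of size n^k even on infinitely many input lengths. -/

import Mathlib

open FirstOrder FirstOrder.Language

namespace CLB

/-! ### Binary length of a natural number (viewing numbers as binary strings). -/
def len (x : ℕ) : ℕ := Nat.size x

/-! ### Boolean circuits.
A circuit is a straight-line program: a list of gates, each gate a natural number
encoding (via pairing) its type (constant / input / not / and / or) and the indices
of its argument wires (earlier gates).  The size of a circuit is its number of gates. -/

def gateEval (x : ℕ → Bool) (prev : List Bool) (g : ℕ) : Bool :=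
  let t := g.unpair.1 % 5
  let a := g.unpair.2
  if t = 0 then a % 2 == 1
  else if t = 1 then x (a % (prev.length + 1))
  else if t = 2 then !(prev.getD a false)
  else if t = 3 then (prev.getD a.unpair.1 false) && (prev.getD a.unpair.2 false)
  else (prev.getD a.unpair.1 false) || (prev.getD a.unpair.2 false)

def circEvalList (C : List ℕ) (x : ℕ → Bool) : List Bool :=
  C.foldl (fun prev g => prev ++ [gateEval x prev g]) []

/-- The output of a circuit (the value of its last gate). -/
def circEval (C : List ℕ) (x : ℕ → Bool) : Bool := (circEvalList C x).getLastD false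

/-- Parsing a self-delimiting binary representation of a natural number. -/
def parseNum : List Bool → ℕ → ℕ × List Bool
  | [], acc => (acc, [])
  | [_], acc => (acc, [])
  | b :: c :: rest, acc => if b then parseNum rest (2 * acc + (cond c 1 0)) else (acc, rest)

def decodeLN : ℕ → List Bool → List ℕ
  | 0, _ => []
  | _ + 1, [] => []
  | f + 1, l => (parseNum l 0).1 :: decodeLN f (parseNum l 0).2

/-- Decoding a natural number (binary string) as a circuit. -/
def cDecode (x : ℕ) : List ℕ := decodeLN x.bits.length x.bits

/-- The number of gates of the circuit encoded by `x`. -/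
def csize (x : ℕ) : ℕ := (cDecode x).length

/-- Evaluation of an encoded circuit on the bits of an input string: `C(x)`. -/
def cEval (c x : ℕ) : ℕ := cond (circEval (cDecode c) x.testBit) 1 0

/-- `L` has a circuit with at most `s` gates deciding its length-`n` slice. -/
def HasCircAt (L : Set ℕ) (n s : ℕ) : Prop :=
  ∃ C : List ℕ, C.length ≤ s ∧ ∀ x : ℕ, len x = n → (circEval C x.testBit = true ↔ x ∈ L)

/-- `SIZE[s]`: circuits of size `s(n)` on every sufficiently large input length. -/
def SIZEae (s : ℕ → ℕ) : Set (Set ℕ) := {L | ∃ n₀, ∀ n ≥ n₀, HasCircAt L n (s n)}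

/-- `i.o.SIZE[s]`: circuits of size `s(n)` on infinitely many input lengths. -/
def ioSIZE (s : ℕ → ℕ) : Set (Set ℕ) := {L | ∀ n₀, ∃ n ≥ n₀, HasCircAt L n (s n)}

/-- `SIZE[poly]`. -/
def SIZEpoly : Set (Set ℕ) := {L | ∃ c, L ∈ SIZEae (fun n => n ^ c + c)}

/-! ### Polynomial-time functions.
Following Cobham's machine-independent characterization of the polynomial-time
functions (the characterization on which Cook's theory `PV` is based), `PTF` is the
smallest class of functions `ℕ → ℕ` (binary strings, paired via `Nat.pair`) containing
a stock of basic polynomial-time functions and closed under composition, pairing and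
limited recursion on notation. -/

/-- Limited recursion on notation (the recursive call is on the string with its last
bit removed, and the result is truncated by the bounding function `b`). -/
def limRonF (g h b : ℕ → ℕ) (x : ℕ) : ℕ → ℕ
  | 0 => g x
  | y + 1 =>
      min (h (Nat.pair x (Nat.pair (y + 1) (limRonF g h b x ((y + 1) / 2)))))
        (b (Nat.pair x (y + 1)))
  termination_by y => y
  decreasing_by exact Nat.div_lt_self (Nat.succ_pos y) one_lt_two

/-- The class of polynomial-time computable functions (Cobham-style algebra). -/
inductive PTF : (ℕ → ℕ) → Prop
  | id' : PTF (fun z => z)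
  | const (c : ℕ) : PTF (fun _ => c)
  | up1 : PTF (fun z => z.unpair.1)
  | up2 : PTF (fun z => z.unpair.2)
  | lenB : PTF (fun z => len z)
  | add : PTF (fun z => z.unpair.1 + z.unpair.2)
  | sub : PTF (fun z => z.unpair.1 - z.unpair.2)
  | mul : PTF (fun z => z.unpair.1 * z.unpair.2)
  | div : PTF (fun z => z.unpair.1 / z.unpair.2)
  | mod : PTF (fun z => z.unpair.1 % z.unpair.2)
  | smash : PTF (fun z => 2 ^ (len z.unpair.1 * len z.unpair.2))
  | unaryPow (c : ℕ) : PTF (fun z => 2 ^ (len z ^ c))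
  | powc (c : ℕ) : PTF (fun z => z ^ c)
  | ite0 : PTF (fun z => if z.unpair.1 = 0 then z.unpair.2.unpair.1 else z.unpair.2.unpair.2)
  | csizeB : PTF (fun z => csize z)
  | cEvalB : PTF (fun z => cEval z.unpair.1 z.unpair.2)
  | evalnB : PTF (fun z =>
      (Nat.Partrec.Code.evaln (len z.unpair.1)
        (Denumerable.ofNat Nat.Partrec.Code z.unpair.2.unpair.1) z.unpair.2.unpair.2).getD 0)
  | comp {f g} : PTF f → PTF g → PTF (fun z => f (g z))
  | pairF {f g} : PTF f → PTF g → PTF (fun z => Nat.pair (f z) (g z))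
  | limRon {g h b} : PTF g → PTF h → PTF b →
      PTF (fun z => limRonF g h b z.unpair.1 z.unpair.2)

theorem PTF.comp2 {F : ℕ → ℕ → ℕ} (hF : PTF (fun z => F z.unpair.1 z.unpair.2))
    {g h : ℕ → ℕ} (hg : PTF g) (hh : PTF h) : PTF (fun z => F (g z) (h z)) := by
  have := hF.comp (hg.pairF hh)
  simpa using this

/-! ### Complexity classes (over the standard model). -/

/-- `P`: polynomial-time decidable languages. -/
def Pclass : Set (Set ℕ) := {L | ∃ f, PTF f ∧ ∀ x, x ∈ L ↔ f x = 1}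

/-- `NP`: languages with polynomial-time verifiable, polynomially short witnesses. -/
def NPclass : Set (Set ℕ) :=
  {L | ∃ (c : ℕ) (V : ℕ → ℕ), PTF V ∧
    ∀ x, x ∈ L ↔ ∃ y, len y ≤ len x ^ c + c ∧ V (Nat.pair x y) = 1}

/-- Polynomial-time many-one reducibility. -/
def PolyReducible (A B : Set ℕ) : Prop := ∃ f, PTF f ∧ ∀ x, x ∈ A ↔ f x ∈ B

/-- `NP`-completeness (w.r.t. polynomial-time many-one reductions). -/
def NPComplete (O : Set ℕ) : Prop := O ∈ NPclass ∧ ∀ L ∈ NPclass, PolyReducible L O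

/-- Encoding a list of oracle answers as a number. -/
def encodeBools (l : List Bool) : ℕ := l.foldl (fun n b => 2 * n + (cond b 1 0)) 1

open Classical in
/-- The list of answers of oracle `O` to the first `i` adaptively generated
queries, where the next query is computed by `q` from the input and the
previous answers. -/
noncomputable def answers (O : Set ℕ) (q : ℕ → ℕ) (x : ℕ) : ℕ → List Bool
  | 0 => []
  | i + 1 =>
      answers O q x i ++
        [if q (Nat.pair x (encodeBools (answers O q x i))) ∈ O then true else false]

/-- `P^{O[ℓ]}`: languages decided in deterministic polynomial time with at most
`ℓ(n)` adaptive queries to the oracle `O` (queries generated by the polynomial-time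
function `q`, final decision by the polynomial-time function `d`). -/
def PNPQ (O : Set ℕ) (ℓ : ℕ → ℕ) : Set (Set ℕ) :=
  {L | ∃ q d, PTF q ∧ PTF d ∧
    ∀ x, x ∈ L ↔ d (Nat.pair x (encodeBools (answers O q x (ℓ (len x))))) = 1}

/-- `P^NP`: polynomial time with polynomially many adaptive queries to an
`NP`-complete oracle. -/
def PNPclass : Set (Set ℕ) :=
  {L | ∃ O, NPComplete O ∧ ∃ c, L ∈ PNPQ O (fun n => n ^ c + c)}

/-- `P^{NP[n]}`: at most `n` adaptive queries to an `NP`-complete oracle. -/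
def PNPnClass : Set (Set ℕ) := {L | ∃ O, NPComplete O ∧ L ∈ PNPQ O (fun n => n)}

/-- `P^{NP[c·log n]}`: at most `c·(log n + 1)` adaptive queries to an `NP`-complete oracle. -/
def PNPlogClass (c : ℕ) : Set (Set ℕ) :=
  {L | ∃ O, NPComplete O ∧ L ∈ PNPQ O (fun n => c * (Nat.log 2 n + 1))}

/-- The levels `Σ^p_k` of the polynomial hierarchy. -/
def SigmaP : ℕ → Set (Set ℕ)
  | 0 => Pclass
  | k + 1 =>
      {L | ∃ (c : ℕ) (L' : Set ℕ), L' ∈ SigmaP k ∧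
        ∀ x, x ∈ L ↔ ∃ y, len y ≤ len x ^ c + c ∧ Nat.pair x y ∉ L'}

/-- The polynomial hierarchy `PH`. -/
def PHclass : Set (Set ℕ) := {L | ∃ k, L ∈ SigmaP k}

/-- Output of a randomized oracle machine: decision function `d` applied to input `x`,
random string `r` and the answers to `m` adaptive oracle queries. -/
noncomputable def zppOut (O : Set ℕ) (q d : ℕ → ℕ) (m : ℕ) (x r : ℕ) : ℕ :=
  d (Nat.pair (Nat.pair x r) (encodeBools (answers O q (Nat.pair x r) m)))

/-- `ZPP^{NP[O(log n)]}`: zero-error probabilistic polynomial time with `O(log n)`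
adaptive queries to an `NP`-complete oracle.  The machine outputs `1` (accept),
`0` (reject) or anything else (abort `?`); it is never wrong and aborts with
probability at most `1/2` over the uniformly random string `r`. -/
noncomputable def ZPPNPlogClass : Set (Set ℕ) :=
  {L | ∃ O, NPComplete O ∧ ∃ (c : ℕ) (q d : ℕ → ℕ), PTF q ∧ PTF d ∧
    ∀ x : ℕ,
      (∀ r < 2 ^ (len x ^ c + c),
        (zppOut O q d (c * (Nat.log 2 (len x) + 1)) x r = 1 → x ∈ L) ∧
        (zppOut O q d (c * (Nat.log 2 (len x) + 1)) x r = 0 → x ∉ L)) ∧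
      2 * {r | r < 2 ^ (len x ^ c + c) ∧
            zppOut O q d (c * (Nat.log 2 (len x) + 1)) x r ≠ 1 ∧
            zppOut O q d (c * (Nat.log 2 (len x) + 1)) x r ≠ 0}.ncard
        ≤ 2 ^ (len x ^ c + c)}

/-! ### Kannan's hard language. -/

/-- `T` (a truth table for input length `n`) is hard for circuits of size `n^k`. -/
def TTHard (n k : ℕ) (T : ℕ) : Prop :=
  T < 2 ^ 2 ^ n ∧
    ¬ ∃ C : List ℕ, C.length ≤ n ^ k ∧ ∀ x : ℕ, len x = n → circEval C x.testBit = T.testBit x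

/-- The lexicographically first truth table on length-`n` inputs that is hard for
circuits of size `n^k` (or `0` if none exists). -/
noncomputable def leastHardTT (n k : ℕ) : ℕ := sInf {T | TTHard n k T}

/-- The language whose length-`n` slice is the lexicographically first truth table
of a function on length-`n` inputs not computable by circuits of size `n^k`. -/
noncomputable def kannanLang (k : ℕ) : Set ℕ :=
  {x | (leastHardTT (len x) k).testBit x = true}

end CLB

namespace CLB

/-! ### The language `L(PV)`.
`L(PV)` has a function symbol for each polynomial-time algorithm (of each arity,
multi-ary functions being handled via the pairing function), together with the
order relation `≤`.  Equality is built into first-order logic. -/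

/-- Decoding a number as a tuple of arguments. -/
def argAt : ℕ → ℕ → ℕ
  | z, 0 => z.unpair.1
  | z, i + 1 => argAt z.unpair.2 i

def decodeVec (n : ℕ) (z : ℕ) : Fin n → ℕ := fun i => argAt z i.val

/-- `f : (Fin n → ℕ) → ℕ` is a polynomial-time `n`-ary function. -/
def PolyVec (n : ℕ) (f : (Fin n → ℕ) → ℕ) : Prop := PTF (fun z => f (decodeVec n z))

inductive LPVRel : ℕ → Type | le : LPVRel 2

/-- The first-order language of `PV`: a function symbol for every polynomial-time
algorithm, and the relation symbol `≤`. -/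
def LPV : FirstOrder.Language :=
  ⟨fun n => {f : (Fin n → ℕ) → ℕ // PolyVec n f}, LPVRel⟩

/-- The standard model `ℕ`: every function symbol is interpreted by the
polynomial-time function it names. -/
instance : LPV.Structure ℕ where
  funMap f v := f.1 v
  RelMap r v := match r with | LPVRel.le => v 0 ≤ v 1

abbrev BF (n : ℕ) := LPV.BoundedFormula Empty n
abbrev Tm (n : ℕ) := LPV.Term (Empty ⊕ Fin n)

/-! ### Construction of some particular `PV` function symbols. -/

def mkF0 (c : ℕ) : LPV.Functions 0 := ⟨fun _ => c, PTF.const c⟩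

def mkF1 (f : ℕ → ℕ) (h : PTF (fun z => f z.unpair.1)) : LPV.Functions 1 :=
  ⟨fun v => f (v 0), h⟩

def mkF2 (f : ℕ → ℕ → ℕ) (h : PTF (fun z => f z.unpair.1 z.unpair.2.unpair.1)) :
    LPV.Functions 2 :=
  ⟨fun v => f (v 0) (v 1), h⟩

def mkF3 (f : ℕ → ℕ → ℕ → ℕ)
    (h : PTF (fun z => f z.unpair.1 z.unpair.2.unpair.1 z.unpair.2.unpair.2.unpair.1)) :
    LPV.Functions 3 :=
  ⟨fun v => f (v 0) (v 1) (v 2), h⟩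

/-- The constant `0`. -/
def zeroF : LPV.Functions 0 := mkF0 0
/-- The constant `1`. -/
def oneF : LPV.Functions 0 := mkF0 1
/-- The length function `x ↦ |x|`. -/
def lenSym : LPV.Functions 1 := mkF1 len (PTF.lenB.comp PTF.up1)
/-- Circuit size `C ↦ |C|` (number of gates). -/
def csizeSym : LPV.Functions 1 := mkF1 csize (PTF.csizeB.comp PTF.up1)
/-- Circuit evaluation `(C, x) ↦ C(x)`. -/
def cEvalSym : LPV.Functions 2 :=
  mkF2 cEval (PTF.comp2 PTF.cEvalB PTF.up1 (PTF.up1.comp PTF.up2))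
/-- Successor `x ↦ x + 1`. -/
def succSym : LPV.Functions 1 :=
  mkF1 (fun x => x + 1) (PTF.comp2 PTF.add PTF.up1 (PTF.const 1))
/-- `x ↦ x + c`. -/
def addConstSym (c : ℕ) : LPV.Functions 1 :=
  mkF1 (fun x => x + c) (PTF.comp2 PTF.add PTF.up1 (PTF.const c))
/-- `x ↦ 2x + 1`. -/
def dblS1Sym : LPV.Functions 1 :=
  mkF1 (fun x => 2 * x + 1)
    (PTF.comp2 PTF.add (PTF.comp2 PTF.mul (PTF.const 2) PTF.up1) (PTF.const 1))
/-- `x ↦ |x|^k`. -/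
def powLenSym (k : ℕ) : LPV.Functions 1 :=
  mkF1 (fun x => len x ^ k) ((PTF.powc k).comp (PTF.lenB.comp PTF.up1))
/-- The all-ones string of the length of `x`:  `x ↦ 2^{|x|} - 1` (i.e. `1^{(|x|)}`). -/
def onesSym : LPV.Functions 1 :=
  mkF1 (fun x => 2 ^ len x - 1)
    (by
      have h1 : PTF (fun z => 2 ^ (len z.unpair.1 ^ 1)) := (PTF.unaryPow 1).comp PTF.up1
      have h : PTF (fun z => 2 ^ len z.unpair.1) := by simpa using h1
      exact PTF.comp2 PTF.sub h (PTF.const 1))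
/-- The unary clock `x ↦ 1^{(|x|^c)} = 2^{|x|^c} - 1`. -/
def clockSym (c : ℕ) : LPV.Functions 1 :=
  mkF1 (fun x => 2 ^ (len x ^ c) - 1)
    (PTF.comp2 PTF.sub ((PTF.unaryPow c).comp PTF.up1) (PTF.const 1))
/-- Pairing. -/
def pairSym : LPV.Functions 2 := mkF2 Nat.pair (PTF.up1.pairF (PTF.up1.comp PTF.up2))
/-- First projection. -/
def fstSym : LPV.Functions 1 := mkF1 (fun x => x.unpair.1) (PTF.up1.comp PTF.up1)
/-- Second projection. -/
def sndSym : LPV.Functions 1 := mkF1 (fun x => x.unpair.2) (PTF.up2.comp PTF.up1)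
/-- The clocked universal machine: `(s, e, x) ↦` the output of the algorithm with
code `e` on input `x` run for `|s|` steps (and `0` if it has not halted). -/
def timedSym : LPV.Functions 3 :=
  mkF3 (fun s e x =>
      (Nat.Partrec.Code.evaln (len s) (Denumerable.ofNat Nat.Partrec.Code e) x).getD 0)
    (by
      have := PTF.evalnB.comp
        (PTF.up1.pairF ((PTF.up1.comp PTF.up2).pairF
          (PTF.up1.comp (PTF.up2.comp PTF.up2))))
      simpa using this)

/-! ### Formula-building helpers. -/

def xv {n : ℕ} (i : Fin n) : Tm n := Term.var (Sum.inr i)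
def ap1 {n : ℕ} (f : LPV.Functions 1) (t : Tm n) : Tm n := Term.func f ![t]
def ap2 {n : ℕ} (f : LPV.Functions 2) (t s : Tm n) : Tm n := Term.func f ![t, s]
def ap3 {n : ℕ} (f : LPV.Functions 3) (t s u : Tm n) : Tm n := Term.func f ![t, s, u]
def cst {n : ℕ} (f : LPV.Functions 0) : Tm n := Term.func f ![]
def oneT {n : ℕ} : Tm n := cst oneF
def zeroT {n : ℕ} : Tm n := cst zeroF
def leF {n : ℕ} (t s : Tm n) : BF n := BoundedFormula.rel LPVRel.le ![t, s]
def andF {n : ℕ} (φ ψ : BF n) : BF n := (φ.imp ψ.not).not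
def orF {n : ℕ} (φ ψ : BF n) : BF n := φ.not.imp ψ

/-- `θ(t)`: substitution of a term for the topmost (de Bruijn) variable, expressed
via a quantifier: `∀ y (y = t → θ(y))`. -/
def substTop {n : ℕ} (t : Tm n) (θ : BF (n + 1)) : BF n :=
  ((Term.bdEqual (xv (Fin.last n)) (t.liftAt 1 n)).imp θ).all

/-- The bounded existential quantifier `∃ y ≤ t, θ`. -/
def bdEx {n : ℕ} (t : Tm n) (θ : BF (n + 1)) : BF n :=
  (andF (leF (xv (Fin.last n)) (t.liftAt 1 n)) θ).ex

/-- The bounded universal quantifier `∀ y ≤ t, θ`. -/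
def bdAll {n : ℕ} (t : Tm n) (θ : BF (n + 1)) : BF n :=
  ((leF (xv (Fin.last n)) (t.liftAt 1 n)).imp θ).all

/-- `Σ^b_1(PV)`-formulas: a block of bounded existential quantifiers in front of a
quantifier-free formula. -/
inductive IsSigmaB1 : ∀ {n : ℕ}, BF n → Prop
  | of_qf {n : ℕ} {φ : BF n} : φ.IsQF → IsSigmaB1 φ
  | bdex {n : ℕ} (t : Tm n) {φ : BF (n + 1)} : IsSigmaB1 φ → IsSigmaB1 (bdEx t φ)

/-- `Π^b_1(PV)`-formulas. -/
inductive IsPiB1 : ∀ {n : ℕ}, BF n → Prop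
  | of_qf {n : ℕ} {φ : BF n} : φ.IsQF → IsPiB1 φ
  | bdall {n : ℕ} (t : Tm n) {φ : BF (n + 1)} : IsPiB1 φ → IsPiB1 (bdAll t φ)

/-- `Σ^b_2(PV)`-formulas: bounded existential quantifiers in front of a
quantifier-free formula or the negation of a `Σ^b_1`-formula (i.e. a `Π^b_1`-formula). -/
inductive IsSigmaB2 : ∀ {n : ℕ}, BF n → Prop
  | of_pi {n : ℕ} {φ : BF n} : IsPiB1 φ → IsSigmaB2 φ
  | bdex {n : ℕ} (t : Tm n) {φ : BF (n + 1)} : IsSigmaB2 φ → IsSigmaB2 (bdEx t φ)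

/-- Bounded formulas (all quantifiers bounded). -/
inductive IsBdd : ∀ {n : ℕ}, BF n → Prop
  | of_qf {n : ℕ} {φ : BF n} : φ.IsQF → IsBdd φ
  | imp {n : ℕ} {φ ψ : BF n} : IsBdd φ → IsBdd ψ → IsBdd (φ.imp ψ)
  | bdex {n : ℕ} (t : Tm n) {φ : BF (n + 1)} : IsBdd φ → IsBdd (bdEx t φ)
  | bdall {n : ℕ} (t : Tm n) {φ : BF (n + 1)} : IsBdd φ → IsBdd (bdAll t φ)

/-! ### Theories and provability. -/

/-- Provability: by Gödel's completeness theorem we identify provability from a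
first-order theory with semantic consequence. -/
def Proves (T : LPV.Theory) (S : LPV.Sentence) : Prop := T ⊨ᵇ S

/-- `True₀`: the theory of all true universal `L(PV)`-sentences.  (Cook's theory
`PV` is a universal theory sound for the standard model, so `PV ⊆ True₀`; following
the paper, all results are stated for theories containing the corresponding
true sentences, which only strengthens unprovability results.) -/
def True0 : LPV.Theory :=
  {S | (∃ (n : ℕ) (θ : BF n), θ.IsQF ∧ S = θ.alls) ∧ ℕ ⊨ S}

/-- The theory `PV`, taken extensionally (as in the paper, everything works for the
theory of all true universal `L(PV)`-sentences, which contains `PV`). -/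
def PVT : LPV.Theory := True0

/-- `True₁`: the theory of all true `∀Σ^b_1(PV)`-sentences. -/
def True1 : LPV.Theory :=
  {S | (∃ (n : ℕ) (θ : BF n), IsSigmaB1 θ ∧ S = θ.alls) ∧ ℕ ⊨ S}

/-- The length-induction axiom `LIND` for `θ` (with the induction variable the
topmost variable, all other variables universally quantified parameters):
`θ(0) ∧ ∀ x (θ(x) → θ(x+1)) → ∀ x θ(|x|)`. -/
def LINDax {n : ℕ} (θ : BF (n + 1)) : LPV.Sentence :=
  ((andF (substTop zeroT θ)
      ((θ.imp (((Term.bdEqual (xv (⟨n + 1, by omega⟩ : Fin (n + 2)))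
          (ap1 succSym (xv (⟨n, by omega⟩ : Fin (n + 2))))).imp (θ.liftAt 1 n)).all)).all)).imp
    ((((Term.bdEqual (xv (⟨n + 1, by omega⟩ : Fin (n + 2)))
        (ap1 lenSym (xv (⟨n, by omega⟩ : Fin (n + 2))))).imp (θ.liftAt 1 n)).all).all)).alls

/-- The induction axiom `IND` for `θ`:  `θ(0) ∧ ∀ x (θ(x) → θ(x+1)) → ∀ x θ(x)`. -/
def INDax {n : ℕ} (θ : BF (n + 1)) : LPV.Sentence :=
  ((andF (substTop zeroT θ)
      ((θ.imp (((Term.bdEqual (xv (⟨n + 1, by omega⟩ : Fin (n + 2)))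
          (ap1 succSym (xv (⟨n, by omega⟩ : Fin (n + 2))))).imp (θ.liftAt 1 n)).all)).all)).imp
    θ.all).alls

/-- The `Σ^b_1(PV)`-LIND scheme. -/
def LIND1 : LPV.Theory := {S | ∃ (n : ℕ) (θ : BF (n + 1)), IsSigmaB1 θ ∧ S = LINDax θ}

/-- The `Σ^b_1(PV)`-IND scheme. -/
def IND1 : LPV.Theory := {S | ∃ (n : ℕ) (θ : BF (n + 1)), IsSigmaB1 θ ∧ S = INDax θ}

/-- The `Σ^b_2(PV)`-LIND scheme. -/
def LIND2 : LPV.Theory := {S | ∃ (n : ℕ) (θ : BF (n + 1)), IsSigmaB2 θ ∧ S = LINDax θ}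

/-- The surjective weak pigeonhole principle for the function symbol `f` (with a
parameter): `∀ p ∀ a ∃ v ≤ 2a+1 ∀ u ≤ a, f(p,u) ≠ v`. -/
def sWPHPax (f : LPV.Functions 2) : LPV.Sentence :=
  let inner : BF 4 :=
    (leF (xv (3 : Fin 4)) (xv (1 : Fin 4))).imp
      ((Term.bdEqual (ap2 f (xv (0 : Fin 4)) (xv (3 : Fin 4))) (xv (2 : Fin 4))).not)
  let block : BF 3 :=
    andF (leF (xv (2 : Fin 3)) (ap1 dblS1Sym (xv (1 : Fin 3)))) inner.all
  block.ex.all.all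

/-- `sWPHP(PV)`: the surjective weak pigeonhole principle for all `PV` function symbols. -/
def sWPHPthy : LPV.Theory := {S | ∃ f : LPV.Functions 2, S = sWPHPax f}

/-! ### The sentences `UB^k_io(φ)` and friends. -/

/-- The language defined by the `L(PV)`-formula `φ(x)` in the standard model. -/
def LangOf (φ : BF 1) : Set ℕ := {x | φ.Realize (fun e => e.elim) ![x]}

/-- The atomic formula `f(x) = 1` defining the language of the `PV` function symbol `f`. -/
def atomicF (f : LPV.Functions 1) : BF 1 :=
  Term.bdEqual (ap1 f (xv (0 : Fin 1))) oneT

/-- The sentence `UB^k_io(φ)`: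
`∀ 1^{(n)} ∃ 1^{(m)} (m ≥ n) ∃ C_m (|C_m| ≤ m^k) ∀ x (|x| = m), φ(x) ≡ (C_m(x) = 1)`,
formalizing that the boolean functions defined by `φ` are computed on infinitely many
input lengths `m` by circuits with at most `m^k` gates.  (Variables: `y` with `n = |y|`,
`z` with `m = |z|`, the circuit `C`, and the input `x`.) -/
def UBio (k : ℕ) (φ : BF 1) : LPV.Sentence :=
  let inner : BF 4 :=
    (Term.bdEqual (ap1 lenSym (xv (3 : Fin 4))) (ap1 lenSym (xv (1 : Fin 4)))).imp
      ((φ.liftAt 3 0).iff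
        (Term.bdEqual (ap2 cEvalSym (xv (2 : Fin 4)) (xv (3 : Fin 4))) oneT))
  let block : BF 3 :=
    andF (leF (ap1 lenSym (xv (0 : Fin 3))) (ap1 lenSym (xv (1 : Fin 3))))
      (andF (leF (ap1 csizeSym (xv (2 : Fin 3))) (ap1 (powLenSym k) (xv (1 : Fin 3))))
        inner.all)
  block.ex.ex.all

/-- The sentence expressing that the language of `φ` has circuits of size `m^c + c`
on every sufficiently large input length `m` (`φ ∈ SIZE[poly]`, witnessed by the
exponent `c`). -/
def UBae (c : ℕ) (φ : BF 1) : LPV.Sentence :=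
  let inner : BF 4 :=
    (Term.bdEqual (ap1 lenSym (xv (3 : Fin 4))) (ap1 lenSym (xv (1 : Fin 4)))).imp
      ((φ.liftAt 3 0).iff
        (Term.bdEqual (ap2 cEvalSym (xv (2 : Fin 4)) (xv (3 : Fin 4))) oneT))
  let block : BF 3 :=
    andF
      (leF (ap1 csizeSym (xv (2 : Fin 3)))
        (ap1 (addConstSym c) (ap1 (powLenSym c) (xv (1 : Fin 3)))))
      inner.all
  let quant : BF 2 :=
    (leF (ap1 lenSym (xv (0 : Fin 2))) (ap1 lenSym (xv (1 : Fin 2)))).imp block.ex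
  quant.all.ex

/-- The sentence expressing that the language of `φ` has circuits of size `m^c + c`
on every input length `m`. -/
def UBevery (c : ℕ) (φ : BF 1) : LPV.Sentence :=
  let inner : BF 3 :=
    (Term.bdEqual (ap1 lenSym (xv (2 : Fin 3))) (ap1 lenSym (xv (0 : Fin 3)))).imp
      ((φ.liftAt 2 0).iff
        (Term.bdEqual (ap2 cEvalSym (xv (1 : Fin 3)) (xv (2 : Fin 3))) oneT))
  let block : BF 2 :=
    andF
      (leF (ap1 csizeSym (xv (1 : Fin 2)))
        (ap1 (addConstSym c) (ap1 (powLenSym c) (xv (0 : Fin 2)))))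
      inner.all
  block.ex.all

/-- `LB^k_tt(h) = ¬ UB^k_io(h)`: the language of `h` is hard for circuits of size
`m^k` on every input length `m ≥ n`, for some fixed `n`. -/
def LBtt (k : ℕ) (h : LPV.Functions 1) : LPV.Sentence := (UBio k (atomicF h)).not

end CLB

namespace CLB

/-! ### Further sentences used in the statements. -/

/-- The sentence expressing (provable) paddability of the encoding of the language
defined by `φ`, via the padding function symbol `pd`:
`∀ x ∀ z (|x| ≤ |z| → |pd(x,z)| = |z| ∧ (φ(pd(x,z)) ↔ φ(x)))`. -/
def padSent (φ : BF 1) (pd : LPV.Functions 2) : LPV.Sentence :=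
  let t : Tm 2 := ap2 pd (xv (0 : Fin 2)) (xv (1 : Fin 2))
  let phiAt : Tm 2 → BF 2 := fun s =>
    ((Term.bdEqual (xv (2 : Fin 3)) (s.liftAt 1 2)).imp (φ.liftAt 2 0)).all
  let inner : BF 2 :=
    (leF (ap1 lenSym (xv (0 : Fin 2))) (ap1 lenSym (xv (1 : Fin 2)))).imp
      (andF (Term.bdEqual (ap1 lenSym t) (ap1 lenSym (xv (1 : Fin 2))))
        ((phiAt t).iff (phiAt (xv (0 : Fin 2)))))
  inner.alls

/-- The sentence `PNP(ψ) = ∀ x ∀ y (ψ(x,y) → ψ(x, f(x)))`: the polynomial-time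
algorithm `f` finds satisfying assignments for all satisfiable formulas (where
`ψ(x,y)` expresses that `y` satisfies the formula encoded by `x`). -/
def PNPsent (ψ : BF 2) (f : LPV.Functions 1) : LPV.Sentence :=
  (ψ.imp ((substTop (ap1 f (xv (0 : Fin 1))) ψ).liftAt 1 1)).all.all

/-- The satisfaction relation of the `NP`-complete satisfiability problem:
`y` encodes a satisfying assignment of the (circuit form of the) propositional
formula encoded by `x`. -/
def SatRel (x y : ℕ) : Prop := circEval (cDecode x) y.testBit = true

/-- The sentence expressing that `g` is hard on all input lengths against every
algorithm (code `e`) running in time `|x|^{k'-1}` that uses an advice string `w`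
with `|w| ≤ n^{k'}`:
`∀ e ∀ w ∀ 1^{(n)} (|w| ≤ n^{k'} → ∃ x (|x| = n ∧ e(w,x) ≠ g(x)))`. -/
def hardSent (g : LPV.Functions 1) (k' : ℕ) : LPV.Sentence :=
  let run : Tm 4 :=
    ap3 timedSym (ap1 (clockSym (k' - 1)) (xv (3 : Fin 4))) (xv (0 : Fin 4))
      (ap2 pairSym (xv (1 : Fin 4)) (xv (3 : Fin 4)))
  let inner : BF 4 :=
    andF (Term.bdEqual (ap1 lenSym (xv (3 : Fin 4))) (ap1 lenSym (xv (2 : Fin 4))))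
      ((Term.bdEqual run (ap1 g (xv (3 : Fin 4)))).not)
  let body : BF 3 :=
    (leF (ap1 lenSym (xv (1 : Fin 3))) (ap1 (powLenSym k') (xv (2 : Fin 3)))).imp inner.ex
  body.all.all.all

/-- The term `f_i(1^{(n)}, x_1, …, x_{i-1})` in the context with variables
`y = x₀` (the string `1^{(n)}`) and `x_1, …, x_r`. -/
def kptTerm (r : ℕ) (f : (i : Fin r) → LPV.Functions (i + 1)) (i : Fin r) : Tm (r + 1) :=
  Term.func (f i) (fun j => xv ⟨j.val, by have := j.isLt; have := i.isLt; omega⟩)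

/-- The `i`-th disjunct of the KPT disjunction: writing
`(1^{(n_i)}, C^i) := f_i(1^{(n)}, x_1, …, x_{i-1})`, it says
`n_i ≥ n ∧ |C^i| ≤ n_i^k ∧ (|x_i| = n_i → C^i(x_i) = g(x_i))`. -/
def kptDisjunct (k : ℕ) (g : LPV.Functions 1) (r : ℕ)
    (f : (i : Fin r) → LPV.Functions (i + 1)) (i : Fin r) : BF (r + 1) :=
  let t := kptTerm r f i
  let ni : Tm (r + 1) := ap1 lenSym (ap1 fstSym t)
  let Ci : Tm (r + 1) := ap1 sndSym t
  let xi : Tm (r + 1) := xv ⟨i.val + 1, by have := i.isLt; omega⟩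
  andF (leF (ap1 lenSym (xv (⟨0, by omega⟩ : Fin (r + 1)))) ni)
    (andF (leF (ap1 csizeSym Ci) (ap1 (powLenSym k) (ap1 fstSym t)))
      ((Term.bdEqual (ap1 lenSym xi) ni).imp
        (Term.bdEqual (ap2 cEvalSym Ci xi) (ap1 g xi))))

/-- The universal closure of the KPT disjunction obtained by applying the KPT
witnessing theorem to `UB^k_io(g)`. -/
def kptSent (k : ℕ) (g : LPV.Functions 1) (r : ℕ)
    (f : (i : Fin r) → LPV.Functions (i + 1)) : LPV.Sentence :=
  ((List.finRange r).foldr (fun i acc => orF (kptDisjunct k g r f i) acc)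
    BoundedFormula.falsum).alls

/-- The universal closure of `n_i ≤ n^{a_i}`, i.e.
`|fst (f_i(1^{(n)}, x_1, …, x_{i-1}))| ≤ |1^{(n)}|^{a_i} + a_i` (provable polynomial
bound on the output length parameter of the KPT function `f_i`). -/
def lenBoundSent (r : ℕ) (f : (i : Fin r) → LPV.Functions (i + 1)) (i : Fin r)
    (a : ℕ) : LPV.Sentence :=
  (leF (ap1 lenSym (ap1 fstSym (kptTerm r f i)))
    (ap1 (addConstSym a) (ap1 (powLenSym a) (xv (⟨0, by omega⟩ : Fin (r + 1)))))).alls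

/-- `⌊n^{1/c}⌋`. -/
def nthRoot (c n : ℕ) : ℕ := Nat.findGreatest (fun m => m ^ c ≤ n) n

/-- The padded succinct direct-connection language `L¹_succ` of the circuits
produced by the first KPT function `f₁`: its members are tuples
`⟨Bin(n), 1^{(n^{1/10k})}, u, v, w, 1^t⟩` (encoded by iterated pairing, with the
padding parameter `t` arbitrary and ignored) such that gate `u` of the circuit
`C¹ := snd (f₁(1^{(n)}))` is described by the pair `(v, w)`. -/
def LtildeFun (k : ℕ) (f1 : LPV.Functions 1) (z : ℕ) : ℕ :=
  let n := z.unpair.1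
  let pad := z.unpair.2.unpair.1
  let u := z.unpair.2.unpair.2.unpair.1
  let v := z.unpair.2.unpair.2.unpair.2.unpair.1
  let w := z.unpair.2.unpair.2.unpair.2.unpair.2.unpair.1
  let C := cDecode (f1.1 ![2 ^ n - 1]).unpair.2
  if pad = 2 ^ nthRoot (10 * k) n - 1 ∧ C.getD u 0 = Nat.pair v w then 1 else 0

/-- The sentence stating that `u₁` enumerates (all-ones) input parameters
`1^{(n)} = u₁(1^{(ℓ)})` with `n ≥ ℓ` and `|u₁(1^{(ℓ)})| ≤ ℓ^{c₁} + c₁`, and that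
`e₁(1^{(ℓ)})` is a counter-example of length `n₁ = |fst(f₁(u₁(1^{(ℓ)})))|` on which the
circuit `snd(f₁(u₁(1^{(ℓ)})))` produced by `f₁` fails to compute `g`. -/
def ceSent (g f1 u1 e1 : LPV.Functions 1) (c1 : ℕ) : LPV.Sentence :=
  let y : Tm 1 := xv (0 : Fin 1)
  let uy : Tm 1 := ap1 u1 y
  let ey : Tm 1 := ap1 e1 y
  let n1 : Tm 1 := ap1 lenSym (ap1 fstSym (ap1 f1 uy))
  let C1 : Tm 1 := ap1 sndSym (ap1 f1 uy)
  (andF (Term.bdEqual uy (ap1 onesSym uy))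
    (andF (leF (ap1 lenSym y) (ap1 lenSym uy))
      (andF (leF (ap1 lenSym uy) (ap1 (addConstSym c1) (ap1 (powLenSym c1) y)))
        (andF (Term.bdEqual (ap1 lenSym ey) n1)
          ((Term.bdEqual (ap1 g ey) (ap2 cEvalSym C1 ey)).not))))).alls

end CLB

/-!
Kannan's argument. At a large input length `n`, truth tables with `N = tableLength k n` entries
(polynomially many in `n`) outnumber the codes of circuits with `n ^ k` gates, so some table is
hard for all of them. The language places the least hard table on the first `N` strings of length
`n` (the string `x` reads entry `x % N`), so no circuit with `n ^ k` gates decides it at length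
`n`. "`T` is the least hard table" is `∀ c ∃ y` (hardness) together with `∀ T' < T ∃ c' ∀ v`
(minimality); with polynomially bounded witnesses this is a `Σᵖ₄` definition, and the collapse
`PH ⊆ Pᴺᴾ` places the language in `Pᴺᴾ`.
-/

namespace Nat

theorem size_two_pow_sub_one (j : ℕ) : size (2 ^ j - 1) = j := by
  rcases j with _ | j
  · rfl
  refine le_antisymm (size_le.2 (Nat.sub_lt (Nat.two_pow_pos _) one_pos)) (lt_size.2 ?_)
  rw [Nat.pow_succ]
  have := Nat.one_le_two_pow (n := j)
  omega

theorem size_pair_le (a b : ℕ) : size (pair a b) ≤ 2 * (size a + size b) := by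
  have hmax : max a b + 1 ≤ 2 ^ (size a + size b) := by
    have ha : a < 2 ^ (size a + size b) :=
      (lt_size_self a).trans_le (Nat.pow_le_pow_right two_pos (le_add_right _ _))
    have hb : b < 2 ^ (size a + size b) :=
      (lt_size_self b).trans_le (Nat.pow_le_pow_right two_pos (le_add_left _ _))
    omega
  refine size_le.2 ((pair_lt_max_add_one_sq a b).trans_le ?_)
  calc (max a b + 1) ^ 2 ≤ (2 ^ (size a + size b)) ^ 2 := Nat.pow_le_pow_left hmax 2
    _ = 2 ^ (2 * (size a + size b)) := by rw [← pow_mul, mul_comm]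

theorem two_pow_size_le_two_mul {n : ℕ} (hn : n ≠ 0) : 2 ^ size n ≤ 2 * n := by
  have hpos : 0 < size n := size_pos.2 (Nat.pos_of_ne_zero hn)
  have h : 2 ^ (size n - 1) ≤ n := lt_size.1 (Nat.sub_lt hpos one_pos)
  calc 2 ^ size n = 2 * 2 ^ (size n - 1) := by rw [← _root_.pow_succ', Nat.sub_add_cancel hpos]
    _ ≤ 2 * n := Nat.mul_le_mul_left 2 h

theorem sq_le_four_mul_two_pow (t : ℕ) : t ^ 2 ≤ 4 * 2 ^ t := by
  obtain ⟨e, f, rfl, hef⟩ : ∃ e f, t = e + f ∧ f ≤ e + 1 ∧ e ≤ f :=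
    ⟨t / 2, t - t / 2, by omega, by omega⟩
  have he := Nat.lt_two_pow_self (n := e)
  have hf := Nat.lt_two_pow_self (n := f)
  rw [pow_add]
  nlinarith [Nat.mul_le_mul he hf]

theorem eq_of_div_two_pow_mod_two_eq {a b m : ℕ} (ha : a < 2 ^ m) (hb : b < 2 ^ m)
    (h : ∀ y < m, a / 2 ^ y % 2 = b / 2 ^ y % 2) : a = b := by
  refine Nat.eq_of_testBit_eq fun y => ?_
  rcases lt_or_ge y m with hy | hy
  · simp only [Nat.testBit_eq_decide_div_mod_eq, h y hy]
  · rw [Nat.testBit_lt_two_pow (ha.trans_le (Nat.pow_le_pow_right two_pos hy)),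
      Nat.testBit_lt_two_pow (hb.trans_le (Nat.pow_le_pow_right two_pos hy))]

end Nat

namespace CLB

/-! ### Circuit codes -/

def encodeDigits : List Bool → List Bool
  | [] => [false, true]
  | b :: l => true :: b :: encodeDigits l

theorem parseNum_encodeDigits_append (l rest : List Bool) (acc : ℕ) :
    parseNum (encodeDigits l ++ rest) acc =
      (l.foldl (fun a b => 2 * a + cond b 1 0) acc, rest) := by
  induction l generalizing acc with
  | nil => simp [encodeDigits, parseNum]
  | cons b l ih => simp [encodeDigits, parseNum, ih]

theorem length_encodeDigits (l : List Bool) : (encodeDigits l).length = 2 * l.length + 2 := by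
  induction l with
  | nil => rfl
  | cons b l ih => simp only [encodeDigits, List.length_cons, ih]; ring

theorem exists_encodeDigits_eq_cons (l : List Bool) : ∃ b r, encodeDigits l = b :: r := by
  cases l <;> exact ⟨_, _, rfl⟩

theorem getLast?_encodeDigits (l : List Bool) : (encodeDigits l).getLast? = some true := by
  induction l with
  | nil => rfl
  | cons b l ih => obtain ⟨c, r, h⟩ := exists_encodeDigits_eq_cons l; simp_all [encodeDigits]

theorem foldl_bits_reverse (g : ℕ) :
    g.bits.reverse.foldl (fun a b => 2 * a + cond b 1 0) 0 = g := by
  conv_rhs => rw [← Nat.ofDigits_digits 2 g, Nat.digits_two_eq_bits]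
  rw [List.foldl_reverse]
  induction g.bits with
  | nil => rfl
  | cons b l ih => simp [ih, Nat.ofDigits_cons]; ring

def encodeGate (g : ℕ) : List Bool := encodeDigits g.bits.reverse

theorem parseNum_encodeGate_append (g : ℕ) (rest : List Bool) :
    parseNum (encodeGate g ++ rest) 0 = (g, rest) := by
  rw [encodeGate, parseNum_encodeDigits_append, foldl_bits_reverse]

theorem length_encodeGate (g : ℕ) : (encodeGate g).length = 2 * Nat.size g + 2 := by
  rw [encodeGate, length_encodeDigits, List.length_reverse, Nat.size_eq_bits_len]

def encodeGates (C : List ℕ) : List Bool := (C.map encodeGate).flatten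

theorem decodeLN_encodeGates (C : List ℕ) (f : ℕ) (hf : C.length ≤ f) :
    decodeLN f (encodeGates C) = C := by
  induction C generalizing f with
  | nil => cases f <;> simp [encodeGates, decodeLN]
  | cons g C ih =>
    obtain ⟨f, rfl⟩ : ∃ f', f = f' + 1 := ⟨f - 1, by simp at hf; omega⟩
    have hparse := parseNum_encodeGate_append g (encodeGates C)
    obtain ⟨b, l, hbl⟩ := exists_encodeDigits_eq_cons g.bits.reverse
    rw [encodeGate, hbl, List.cons_append] at hparse
    rw [encodeGates, List.map_cons, List.flatten_cons, ← encodeGates, encodeGate, hbl,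
      List.cons_append, decodeLN, hparse, ih f (by simpa using hf)]
    exact List.cons_ne_nil _ _

theorem getLast_encodeGates (C : List ℕ) (h : encodeGates C ≠ []) :
    (encodeGates C).getLast h = true := by
  rw [← Option.some_inj, ← List.getLast?_eq_some_getLast]
  induction C with
  | nil => exact absurd rfl h
  | cons g C ih =>
    rw [encodeGates, List.map_cons, List.flatten_cons, ← encodeGates, List.getLast?_append]
    by_cases hC : encodeGates C = []
    · simp [hC, encodeGate, getLast?_encodeDigits]
    · simp [ih hC]

def encodeCircuit (C : List ℕ) : ℕ := Nat.ofDigits 2 ((encodeGates C).map fun b => cond b 1 0)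

theorem bits_encodeCircuit (C : List ℕ) : (encodeCircuit C).bits = encodeGates C := by
  have hdigits := Nat.digits_ofDigits 2 one_lt_two ((encodeGates C).map fun b => cond b 1 0)
    (by simp only [List.mem_map]; rintro _ ⟨b, -, rfl⟩; cases b <;> simp)
    (fun h => by simp [List.getLast_map, getLast_encodeGates C (by simpa using h)])
  rw [Nat.digits_two_eq_bits] at hdigits
  exact List.map_injective_iff.2 (fun a b h => by cases a <;> cases b <;> simp_all) hdigits

theorem length_encodeGates (C : List ℕ) :
    (encodeGates C).length = (C.map fun g => 2 * Nat.size g + 2).sum := by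
  simp [encodeGates, List.length_flatten, Function.comp_def, length_encodeGate]

theorem cDecode_encodeCircuit (C : List ℕ) : cDecode (encodeCircuit C) = C := by
  rw [cDecode, bits_encodeCircuit]
  refine decodeLN_encodeGates C _ ?_
  rw [length_encodeGates]
  simpa using List.length_le_sum_of_one_le (C.map fun g => 2 * Nat.size g + 2) (by simp)

theorem size_encodeCircuit_le (C : List ℕ) (B : ℕ) (h : ∀ g ∈ C, Nat.size g ≤ B) :
    Nat.size (encodeCircuit C) ≤ C.length * (2 * B + 2) := by
  rw [← Nat.size_eq_bits_len, bits_encodeCircuit, length_encodeGates]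
  simpa using List.sum_le_card_nsmul (C.map fun g => 2 * Nat.size g + 2) (2 * B + 2)
    (by simpa using fun g hg => h g hg)

/-! ### Canonical circuits -/

/-- Wires at or after position `i` read `false` in `gateEval`, so clamping references to `i`
changes nothing, while it bounds the gate by a polynomial in `i`. -/
def canonicalGate (i g : ℕ) : ℕ :=
  if g.unpair.1 % 5 = 0 then Nat.pair 0 (g.unpair.2 % 2)
  else if g.unpair.1 % 5 = 1 then Nat.pair 1 (g.unpair.2 % (i + 1))
  else if g.unpair.1 % 5 = 2 then Nat.pair 2 (min g.unpair.2 i)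
  else if g.unpair.1 % 5 = 3 then
    Nat.pair 3 (Nat.pair (min g.unpair.2.unpair.1 i) (min g.unpair.2.unpair.2 i))
  else Nat.pair 4 (Nat.pair (min g.unpair.2.unpair.1 i) (min g.unpair.2.unpair.2 i))

theorem getD_min_length (l : List Bool) (a : ℕ) :
    l[min a l.length]?.getD false = l[a]?.getD false := by
  rcases le_total a l.length with h | h
  · rw [min_eq_left h]
  · simp [h]

theorem gateEval_canonicalGate (x : ℕ → Bool) (prev : List Bool) (g : ℕ) :
    gateEval x prev (canonicalGate prev.length g) = gateEval x prev g := by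
  unfold gateEval canonicalGate
  have h5 : g.unpair.1 % 5 < 5 := Nat.mod_lt _ (by norm_num)
  interval_cases g.unpair.1 % 5 <;> simp [getD_min_length]

def canonicalize (C : List ℕ) : List ℕ := C.mapIdx canonicalGate

theorem foldl_mapIdx_canonicalGate (x : ℕ → Bool) (C : List ℕ) (prev : List Bool) :
    (C.mapIdx fun i => canonicalGate (prev.length + i)).foldl
        (fun p g => p ++ [gateEval x p g]) prev
      = C.foldl (fun p g => p ++ [gateEval x p g]) prev := by
  induction C generalizing prev with
  | nil => rfl
  | cons g C ih =>
    rw [List.mapIdx_cons, List.foldl_cons, List.foldl_cons, Nat.add_zero, gateEval_canonicalGate,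
      ← ih]
    simp only [List.length_append, List.length_singleton, Nat.add_assoc, Nat.add_comm 1]

theorem circEval_canonicalize (C : List ℕ) (x : ℕ → Bool) :
    circEval (canonicalize C) x = circEval C x := by
  simpa [circEval, circEvalList, canonicalize] using
    congrArg (·.getLastD false) (foldl_mapIdx_canonicalGate x C [])

theorem size_canonicalGate_le (i g : ℕ) :
    Nat.size (canonicalGate i g) ≤ 8 * Nat.size i + 8 := by
  have hmin : ∀ a, Nat.size (min a i) ≤ Nat.size i := fun a =>
    Nat.size_le_size (min_le_right a i)
  have htag : ∀ t a, t ≤ 4 → Nat.size a ≤ 4 * Nat.size i + 1 →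
      Nat.size (Nat.pair t a) ≤ 8 * Nat.size i + 8 := fun t a ht ha => by
    have := Nat.size_pair_le t a
    have : Nat.size t ≤ 3 := Nat.size_le.2 (by omega)
    omega
  have hpair : ∀ a b, Nat.size (Nat.pair (min a i) (min b i)) ≤ 4 * Nat.size i + 1 :=
    fun a b => by
      have := Nat.size_pair_le (min a i) (min b i); have := hmin a; have := hmin b; omega
  unfold canonicalGate
  split_ifs
  · exact htag _ _ (by norm_num) (by
      have : Nat.size (g.unpair.2 % 2) ≤ 1 := Nat.size_le.2 (Nat.mod_lt _ two_pos)
      omega)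
  · exact htag _ _ (by norm_num)
      (by
        have : g.unpair.2 % (i + 1) < i + 1 := Nat.mod_lt _ (by omega)
        have := Nat.size_le_size (show g.unpair.2 % (i + 1) ≤ i by omega)
        omega)
  · exact htag _ _ (by norm_num) (by have := hmin g.unpair.2; omega)
  · exact htag _ _ (by norm_num) (hpair _ _)
  · exact htag _ _ (by norm_num) (hpair _ _)

/-! ### The hard language -/

def tableExponent (k : ℕ) : ℕ := 2 * k + 6

def tableLength (k n : ℕ) : ℕ := 2 ^ (tableExponent k * Nat.size n)

/-- A canonical circuit with at most `n ^ k` gates has gates of size at most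
`8 * Nat.size (n ^ k) + 8` (`size_canonicalGate_le`), each coded by `2 * Nat.size g + 2` bits. -/
def codeBound (k n : ℕ) : ℕ := n ^ k * (16 * Nat.size (n ^ k) + 18)

def IsLargeLength (k n : ℕ) : Prop := tableExponent k * Nat.size n < n

def witnessExponent (k : ℕ) : ℕ := 2 * tableExponent k + 2

theorem codeBound_lt_tableLength (k : ℕ) {n : ℕ} (hn : n ≠ 0) :
    codeBound k n < tableLength k n := by
  set t := Nat.size n
  have ht : 1 ≤ t := Nat.size_pos.2 (Nat.pos_of_ne_zero hn)
  have hpow : n ^ k ≤ 2 ^ (k * t) := by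
    rw [mul_comm, pow_mul]; exact Nat.pow_le_pow_left (Nat.lt_size_self n).le k
  have hsize : Nat.size (n ^ k) ≤ k * t + 1 :=
    Nat.size_le.2 (hpow.trans_lt (Nat.pow_lt_pow_right one_lt_two (Nat.lt_succ_self _)))
  have hlin : 16 * Nat.size (n ^ k) + 18 < 2 ^ 6 * 2 ^ (k * t) := by
    have := Nat.lt_two_pow_self (n := k * t); have := Nat.one_le_two_pow (n := k * t); omega
  calc codeBound k n ≤ 2 ^ (k * t) * (16 * Nat.size (n ^ k) + 18) :=
        Nat.mul_le_mul_right _ hpow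
    _ < 2 ^ (k * t) * (2 ^ 6 * 2 ^ (k * t)) :=
        Nat.mul_lt_mul_of_pos_left hlin (Nat.two_pow_pos _)
    _ = 2 ^ (2 * k * t + 6) := by ring
    _ ≤ tableLength k n := Nat.pow_le_pow_right two_pos (by unfold tableExponent; nlinarith)

theorem isLargeLength_of_le {k n : ℕ} (hn : 2 ^ (8 * tableExponent k) ≤ n) :
    IsLargeLength k n := by
  set d := tableExponent k
  have ht : 8 * d + 1 ≤ Nat.size n := by simpa [Nat.size_pow] using Nat.size_le_size hn
  have hsq := Nat.sq_le_four_mul_two_pow (Nat.size n)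
  have h2n := Nat.two_pow_size_le_two_mul (n := n) (by have := Nat.one_le_two_pow.trans hn; omega)
  unfold IsLargeLength
  nlinarith

theorem two_le_of_isLargeLength {k n : ℕ} (h : IsLargeLength k n) : 2 ≤ n := by
  unfold IsLargeLength tableExponent at h
  rcases Nat.lt_or_ge n 2 with hn | hn
  · interval_cases n <;> simp_all
  · exact hn

theorem tableLength_le_two_pow_pred {k n : ℕ} (h : IsLargeLength k n) :
    tableLength k n ≤ 2 ^ (n - 1) :=
  Nat.pow_le_pow_right two_pos (by unfold IsLargeLength at h; omega)

theorem four_mul_tableLength_le {k n : ℕ} (h : IsLargeLength k n) :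
    4 * tableLength k n ≤ n ^ witnessExponent k := by
  have hn := two_le_of_isLargeLength h
  set d := tableExponent k
  calc 4 * tableLength k n = 2 ^ 2 * (2 ^ Nat.size n) ^ d := by
        rw [tableLength, ← pow_mul, mul_comm (Nat.size n)]; ring
    _ ≤ 2 ^ 2 * (2 * n) ^ d :=
        Nat.mul_le_mul_left _ (Nat.pow_le_pow_left (Nat.two_pow_size_le_two_mul (by omega)) d)
    _ = 2 ^ (d + 2) * n ^ d := by ring
    _ ≤ n ^ (d + 2) * n ^ d := Nat.mul_le_mul_right _ (Nat.pow_le_pow_left hn _)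
    _ = n ^ witnessExponent k := by rw [witnessExponent, ← pow_add]; ring

def IsSmallCode (k n c : ℕ) : Prop := Nat.size c ≤ codeBound k n ∧ csize c ≤ n ^ k

/-- `2 ^ n / 2 + y` is the `y`-th string of length `n` (for `y < 2 ^ (n - 1)`), and
`T / 2 ^ y % 2` is entry `y` of the table `T`. -/
def AgreesAt (n c T y : ℕ) : Prop := cEval c (2 ^ n / 2 + y) = T / 2 ^ y % 2

def IsHardTable (k n T : ℕ) : Prop :=
  ∀ c, IsSmallCode k n c → ∃ y < tableLength k n, ¬ AgreesAt n c T y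

def hardTables (k n : ℕ) : Set ℕ := {T | Nat.size T ≤ tableLength k n ∧ IsHardTable k n T}

noncomputable def leastHardTable (k n : ℕ) : ℕ := sInf (hardTables k n)

def hardLang (k : ℕ) : Set ℕ :=
  {x | IsLargeLength k (len x) ∧
    leastHardTable k (len x) / 2 ^ (x % tableLength k (len x)) % 2 = 1}

theorem hardTables_nonempty (k : ℕ) {n : ℕ} (hn : n ≠ 0) : (hardTables k n).Nonempty := by
  set m := tableLength k n
  -- Otherwise every table below `2 ^ m` has a small code agreeing with it, and there are fewer
  -- small codes than such tables.
  by_contra hempty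
  have hcode : ∀ T, ∃ c, T < 2 ^ m → IsSmallCode k n c ∧ ∀ y < m, AgreesAt n c T y := by
    intro T
    by_contra! h
    exact hempty ⟨T, Nat.size_le.2 (h 0).1, fun c hc => by simpa using (h c).2 hc⟩
  choose code hcode using hcode
  obtain ⟨T₁, hT₁, T₂, hT₂, hne, heq⟩ := Finset.exists_ne_map_eq_of_card_lt_of_maps_to
    (s := Finset.range (2 ^ m)) (t := Finset.range (2 ^ codeBound k n)) (f := code)
    (by simpa using Nat.pow_lt_pow_right one_lt_two (codeBound_lt_tableLength k hn))
    (fun T hT => by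
      simpa using Nat.size_le.1 (hcode T (Finset.mem_range.1 hT)).1.1)
  rw [Finset.mem_range] at hT₁ hT₂
  refine hne (Nat.eq_of_div_two_pow_mod_two_eq hT₁ hT₂ fun y hy => ?_)
  have h₁ : AgreesAt n (code T₁) T₁ y := (hcode T₁ hT₁).2 y hy
  have h₂ : AgreesAt n (code T₂) T₂ y := (hcode T₂ hT₂).2 y hy
  rw [AgreesAt] at h₁ h₂
  rw [← h₁, ← h₂, heq]

theorem leastHardTable_mem (k : ℕ) {n : ℕ} (hn : n ≠ 0) : leastHardTable k n ∈ hardTables k n :=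
  Nat.sInf_mem (hardTables_nonempty k hn)

theorem isSmallCode_encodeCircuit_canonicalize {k n : ℕ} {C : List ℕ} (hC : C.length ≤ n ^ k) :
    IsSmallCode k n (encodeCircuit (canonicalize C)) := by
  have hgates : ∀ g ∈ canonicalize C, Nat.size g ≤ 8 * Nat.size (n ^ k) + 8 := by
    intro g hg
    obtain ⟨i, hi, rfl⟩ := List.mem_mapIdx.1 hg
    have := Nat.size_le_size (hi.le.trans hC)
    have := size_canonicalGate_le i C[i]
    omega
  have hlength : (canonicalize C).length = C.length := List.length_mapIdx
  refine ⟨(size_encodeCircuit_le _ _ hgates).trans ?_, ?_⟩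
  · rw [hlength, codeBound]
    exact Nat.mul_le_mul hC (by omega)
  · rw [csize, cDecode_encodeCircuit, hlength]
    exact hC

theorem two_pow_div_two {n : ℕ} (hn : n ≠ 0) : 2 ^ n / 2 = 2 ^ (n - 1) := by
  rw [← Nat.sub_add_cancel (Nat.pos_of_ne_zero hn), pow_succ, Nat.mul_div_cancel _ two_pos,
    Nat.add_sub_cancel]

theorem len_two_pow_div_two_add {n y : ℕ} (hn : n ≠ 0) (hy : y < 2 ^ (n - 1)) :
    len (2 ^ n / 2 + y) = n := by
  rw [len, two_pow_div_two hn]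
  have hsplit : 2 ^ n = 2 ^ (n - 1) + 2 ^ (n - 1) := by
    rw [← two_mul, ← pow_succ', Nat.sub_add_cancel (Nat.pos_of_ne_zero hn)]
  refine le_antisymm (Nat.size_le.2 (by omega)) ?_
  have := Nat.lt_size.2 (Nat.le_add_right (2 ^ (n - 1)) y)
  omega

theorem two_pow_div_two_add_mod {n m y : ℕ} (hm : m ≤ n - 1) (hy : y < 2 ^ m) :
    (2 ^ n / 2 + y) % 2 ^ m = y := by
  rcases Nat.eq_zero_or_pos n with rfl | hn
  · simpa using Nat.mod_eq_of_lt hy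
  rw [two_pow_div_two hn.ne', ← Nat.add_sub_cancel' hm, pow_add, Nat.mul_add_mod,
    Nat.mod_eq_of_lt hy]

theorem not_hasCircAt_hardLang {k n : ℕ} (hlarge : IsLargeLength k n) :
    ¬ HasCircAt (hardLang k) n (n ^ k) := by
  rintro ⟨C, hC, hcorrect⟩
  have hn : n ≠ 0 := by have := two_le_of_isLargeLength hlarge; omega
  obtain ⟨-, hhard⟩ := leastHardTable_mem k hn
  obtain ⟨y, hy, hdisagree⟩ := hhard _ (isSmallCode_encodeCircuit_canonicalize hC)
  have hz : len (2 ^ n / 2 + y) = n :=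
    len_two_pow_div_two_add hn (hy.trans_le (tableLength_le_two_pow_pred hlarge))
  have hzmod : (2 ^ n / 2 + y) % tableLength k n = y :=
    two_pow_div_two_add_mod (by unfold IsLargeLength at hlarge; omega) hy
  have hmem := hcorrect _ hz
  simp only [hardLang, Set.mem_ofPred_eq, hz, hzmod, hlarge, true_and] at hmem
  apply hdisagree
  rw [AgreesAt, cEval, cDecode_encodeCircuit, circEval_canonicalize]
  cases hout : circEval C (2 ^ n / 2 + y).testBit <;>
    simp only [hout, Bool.false_eq_true, false_iff, true_iff] at hmem <;> simp <;> omega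

theorem hardLang_not_mem_ioSIZE (k : ℕ) : hardLang k ∉ ioSIZE (fun n => n ^ k) := fun hio => by
  obtain ⟨n, hn, hcirc⟩ := hio (2 ^ (8 * tableExponent k))
  exact not_hasCircAt_hardLang (isLargeLength_of_le hn) hcirc

/-! ### Polynomial-time predicates -/

theorem PTF.ite {c a b : ℕ → ℕ} (hc : PTF c) (ha : PTF a) (hb : PTF b) :
    PTF fun z => if c z = 0 then a z else b z := by
  simpa using PTF.ite0.comp (hc.pairF (ha.pairF hb))

theorem PTF.two_pow_size {f : ℕ → ℕ} (hf : PTF f) : PTF fun z => 2 ^ Nat.size (f z) := by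
  simpa [len] using PTF.smash.comp (hf.pairF (PTF.const 1))

theorem PTF.tableLength (k : ℕ) {n : ℕ → ℕ} (hn : PTF n) :
    PTF fun z => tableLength k (n z) := by
  simpa [len, CLB.tableLength, Nat.size_two_pow_sub_one, mul_comm] using
    PTF.smash.comp (hn.pairF (PTF.const (2 ^ tableExponent k - 1)))

theorem PTF.codeBound (k : ℕ) {n : ℕ → ℕ} (hn : PTF n) : PTF fun z => codeBound k (n z) :=
  PTF.comp2 PTF.mul ((PTF.powc k).comp hn)
    (PTF.comp2 PTF.add
      (PTF.comp2 PTF.mul (PTF.const 16) (PTF.lenB.comp ((PTF.powc k).comp hn))) (PTF.const 18))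

open Classical in
def PolyTimeDecidable (P : ℕ → Prop) : Prop := PTF fun z => if P z then 1 else 0

namespace PolyTimeDecidable

variable {P Q : ℕ → Prop}

open Classical in
theorem of_ptf {f : ℕ → ℕ} (hf : PTF f) (h : ∀ z, f z = if P z then 1 else 0) :
    PolyTimeDecidable P := by
  rwa [PolyTimeDecidable, ← funext h]

theorem not (hP : PolyTimeDecidable P) : PolyTimeDecidable fun z => ¬ P z :=
  of_ptf (PTF.comp2 PTF.sub (PTF.const 1) hP) fun z => by by_cases P z <;> simp [*]

theorem and (hP : PolyTimeDecidable P) (hQ : PolyTimeDecidable Q) :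
    PolyTimeDecidable fun z => P z ∧ Q z :=
  of_ptf (PTF.comp2 PTF.mul hP hQ) fun z => by by_cases P z <;> by_cases Q z <;> simp [*]

theorem imp (hP : PolyTimeDecidable P) (hQ : PolyTimeDecidable Q) :
    PolyTimeDecidable fun z => P z → Q z :=
  of_ptf (hP.and hQ.not).not fun z => by by_cases P z <;> by_cases Q z <;> simp [*]

theorem or (hP : PolyTimeDecidable P) (hQ : PolyTimeDecidable Q) :
    PolyTimeDecidable fun z => P z ∨ Q z :=
  of_ptf (hP.not.imp hQ) fun z => by by_cases P z <;> by_cases Q z <;> simp [*]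

theorem le {f g : ℕ → ℕ} (hf : PTF f) (hg : PTF g) : PolyTimeDecidable fun z => f z ≤ g z :=
  of_ptf (PTF.ite (PTF.comp2 PTF.sub hf hg) (PTF.const 1) (PTF.const 0)) fun z => by
    split_ifs <;> omega

theorem lt {f g : ℕ → ℕ} (hf : PTF f) (hg : PTF g) : PolyTimeDecidable fun z => f z < g z :=
  le (PTF.comp2 PTF.add hf (PTF.const 1)) hg

theorem eq {f g : ℕ → ℕ} (hf : PTF f) (hg : PTF g) : PolyTimeDecidable fun z => f z = g z :=
  of_ptf ((le hf hg).and (le hg hf)) fun z => by split_ifs <;> omega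

theorem mem_Pclass (hP : PolyTimeDecidable P) : {z | P z} ∈ Pclass :=
  ⟨_, hP, fun z => by by_cases P z <;> simp [*]⟩

end PolyTimeDecidable

/-! ### The `Σᵖ₄` definition -/

/-- Table indices are passed in unary, as the lengths of `u`, `y` and `v`: `PTF` can form
`2 ^ Nat.size u` but not `2 ^ u`. -/
def KannanMatrix (k x T u c T' y c' v : ℕ) : Prop :=
  IsLargeLength k (len x) ∧ Nat.size T ≤ tableLength k (len x) ∧
    Nat.size u = x % tableLength k (len x) ∧ T / 2 ^ Nat.size u % 2 = 1 ∧
    (IsSmallCode k (len x) c →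
      Nat.size y < tableLength k (len x) ∧ ¬ AgreesAt (len x) c T (Nat.size y)) ∧
    (T' < T → tableLength k (len x) < Nat.size T' ∨
      IsSmallCode k (len x) c' ∧
        (Nat.size v < tableLength k (len x) → AgreesAt (len x) c' T' (Nat.size v)))

namespace PolyTimeDecidable

theorem isSmallCode (k : ℕ) {n c : ℕ → ℕ} (hn : PTF n) (hc : PTF c) :
    PolyTimeDecidable fun z => IsSmallCode k (n z) (c z) :=
  (le (PTF.lenB.comp hc) (PTF.codeBound k hn)).and
    (le (PTF.csizeB.comp hc) ((PTF.powc k).comp hn))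

theorem agreesAt {x c T y : ℕ → ℕ} (hx : PTF x) (hc : PTF c) (hT : PTF T) (hy : PTF y) :
    PolyTimeDecidable fun z => AgreesAt (len (x z)) (c z) (T z) (Nat.size (y z)) :=
  eq (PTF.comp2 PTF.cEvalB hc
      (PTF.comp2 PTF.add (PTF.comp2 PTF.div hx.two_pow_size (PTF.const 2)) (PTF.lenB.comp hy)))
    (PTF.comp2 PTF.mod (PTF.comp2 PTF.div hT hy.two_pow_size) (PTF.const 2))

theorem kannanMatrix (k : ℕ) {x T u c T' y c' v : ℕ → ℕ} (hx : PTF x) (hT : PTF T) (hu : PTF u)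
    (hc : PTF c) (hT' : PTF T') (hy : PTF y) (hc' : PTF c') (hv : PTF v) :
    PolyTimeDecidable fun z =>
      KannanMatrix k (x z) (T z) (u z) (c z) (T' z) (y z) (c' z) (v z) := by
  have hn : PTF fun z => len (x z) := PTF.lenB.comp hx
  have hm := PTF.tableLength k hn
  exact (lt (PTF.comp2 PTF.mul (PTF.const _) (PTF.lenB.comp hn)) hn).and <|
    (le (PTF.lenB.comp hT) hm).and <| (eq (PTF.lenB.comp hu) (PTF.comp2 PTF.mod hx hm)).and <|
    (eq (PTF.comp2 PTF.mod (PTF.comp2 PTF.div hT hu.two_pow_size) (PTF.const 2))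
      (PTF.const 1)).and <|
    ((isSmallCode k hn hc).imp ((lt (PTF.lenB.comp hy) hm).and (agreesAt hx hc hT hy).not)).and <|
    (lt hT' hT).imp <| (lt hm (PTF.lenB.comp hT')).or <|
      (isSmallCode k hn hc').and ((lt (PTF.lenB.comp hv) hm).imp (agreesAt hx hc' hT' hv))

end PolyTimeDecidable

def IsKannanCertificate (k x T u : ℕ) : Prop :=
  IsLargeLength k (len x) ∧ T ∈ hardTables k (len x) ∧ (∀ T' < T, T' ∉ hardTables k (len x)) ∧
    Nat.size u = x % tableLength k (len x) ∧ T / 2 ^ Nat.size u % 2 = 1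

theorem len_ne_zero_of_isLargeLength {k x : ℕ} (h : IsLargeLength k (len x)) : len x ≠ 0 := by
  have := two_le_of_isLargeLength h
  omega

theorem mem_hardLang_iff_exists_certificate {k x : ℕ} :
    x ∈ hardLang k ↔ ∃ T u, IsKannanCertificate k x T u := by
  constructor
  · rintro ⟨hlarge, hbit⟩
    refine ⟨_, 2 ^ (x % tableLength k (len x)) - 1, hlarge,
      leastHardTable_mem k (len_ne_zero_of_isLargeLength hlarge),
      fun T' hT' => Nat.notMem_of_lt_sInf hT', Nat.size_two_pow_sub_one _, ?_⟩
    rwa [Nat.size_two_pow_sub_one]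
  · rintro ⟨T, u, hlarge, hT, hmin, hu, hbit⟩
    have hleast : leastHardTable k (len x) = T :=
      le_antisymm (Nat.sInf_le hT) (not_lt.1 fun h => hmin _ h (Nat.sInf_mem ⟨T, hT⟩))
    exact ⟨hlarge, by rwa [hleast, ← hu]⟩

theorem IsKannanCertificate.exists_response {k x T u : ℕ} (h : IsKannanCertificate k x T u)
    (c T' : ℕ) : ∃ y c', Nat.size y ≤ tableLength k (len x) ∧
      Nat.size c' ≤ tableLength k (len x) ∧ ∀ v, KannanMatrix k x T u c T' y c' v := by
  obtain ⟨hlarge, ⟨hTsize, hhard⟩, hmin, hu, hbit⟩ := h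
  set n := len x
  set m := tableLength k n
  obtain ⟨y, hy, hdisagree⟩ : ∃ y, Nat.size y ≤ m ∧
      (IsSmallCode k n c → Nat.size y < m ∧ ¬ AgreesAt n c T (Nat.size y)) := by
    by_cases hc : IsSmallCode k n c
    · obtain ⟨j, hj, hne⟩ := hhard c hc
      exact ⟨2 ^ j - 1, by rw [Nat.size_two_pow_sub_one]; omega,
        fun _ => by rw [Nat.size_two_pow_sub_one]; exact ⟨hj, hne⟩⟩
    · exact ⟨0, by simp, fun h => absurd h hc⟩
  obtain ⟨c', hc', hagree⟩ : ∃ c', Nat.size c' ≤ m ∧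
      (T' < T → m < Nat.size T' ∨ IsSmallCode k n c' ∧ ∀ j < m, AgreesAt n c' T' j) := by
    by_cases hT' : T' < T ∧ Nat.size T' ≤ m
    · have hsoft : ¬ IsHardTable k n T' := fun hard => hmin T' hT'.1 ⟨hT'.2, hard⟩
      simp only [IsHardTable, not_forall, not_exists, not_and, not_not] at hsoft
      obtain ⟨c', hc', hagree⟩ := hsoft
      have hcode := codeBound_lt_tableLength k (len_ne_zero_of_isLargeLength hlarge)
      exact ⟨c', hc'.1.trans hcode.le, fun _ => Or.inr ⟨hc', hagree⟩⟩
    · exact ⟨0, by simp, fun hlt => Or.inl (by omega)⟩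
  exact ⟨y, c', hy, hc', fun v => ⟨hlarge, hTsize, hu, hbit, hdisagree,
    fun hlt => (hagree hlt).imp_right fun ⟨hsmall, hall⟩ => ⟨hsmall, hall _⟩⟩⟩

theorem isKannanCertificate_of_forall_exists_forall {k x T u : ℕ}
    (h : ∀ c T', Nat.size c ≤ tableLength k (len x) → Nat.size T' ≤ tableLength k (len x) →
      ∃ y c', ∀ v, Nat.size v ≤ tableLength k (len x) → KannanMatrix k x T u c T' y c' v) :
    IsKannanCertificate k x T u := by
  obtain ⟨_, _, hmatrix⟩ := h 0 0 (by simp) (by simp)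
  obtain ⟨hlarge, hTsize, hu, hbit, -⟩ := hmatrix 0 (by simp)
  have hcode : ∀ c, IsSmallCode k (len x) c → Nat.size c ≤ tableLength k (len x) := fun c hc =>
    hc.1.trans (codeBound_lt_tableLength k (len_ne_zero_of_isLargeLength hlarge)).le
  refine ⟨hlarge, ⟨hTsize, fun c hc => ?_⟩, fun T' hlt hT' => ?_, hu, hbit⟩
  · obtain ⟨y, _, hmatrix⟩ := h c 0 (hcode c hc) (by simp)
    obtain ⟨hy, hne⟩ := (hmatrix 0 (by simp)).2.2.2.2.1 hc
    exact ⟨_, hy, hne⟩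
  · obtain ⟨_, c', hmatrix⟩ := h 0 T' (by simp) hT'.1
    obtain hbig | ⟨hc', -⟩ := (hmatrix 0 (by simp)).2.2.2.2.2 hlt
    · exact absurd hT'.1 (not_le.2 hbig)
    obtain ⟨j, hj, hne⟩ := hT'.2 c' hc'
    obtain hbig | ⟨-, hagree⟩ :=
      (hmatrix (2 ^ j - 1) (by rw [Nat.size_two_pow_sub_one]; omega)).2.2.2.2.2 hlt
    · exact absurd hT'.1 (not_le.2 hbig)
    rw [Nat.size_two_pow_sub_one] at hagree
    exact hne (hagree hj)

def boundedExists (c : ℕ) (L : Set ℕ) : Set ℕ :=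
  {w | ∃ v, len v ≤ len w ^ c + c ∧ Nat.pair w v ∉ L}

theorem boundedExists_mem_SigmaP {L : Set ℕ} {j : ℕ} (c : ℕ) (hL : L ∈ SigmaP j) :
    boundedExists c L ∈ SigmaP (j + 1) :=
  ⟨c, L, hL, fun _ => Iff.rfl⟩

theorem mem_boundedExists_four {c x : ℕ} {L : Set ℕ} :
    x ∈ boundedExists c (boundedExists c (boundedExists c (boundedExists c L))) ↔
      ∃ Y, len Y ≤ len x ^ c + c ∧ ∀ Z, len Z ≤ len (Nat.pair x Y) ^ c + c →
        ∃ W, len W ≤ len (Nat.pair (Nat.pair x Y) Z) ^ c + c ∧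
          ∀ V, len V ≤ len (Nat.pair (Nat.pair (Nat.pair x Y) Z) W) ^ c + c →
            Nat.pair (Nat.pair (Nat.pair (Nat.pair x Y) Z) W) V ∈ L := by
  simp [boundedExists]

/-- The matrix read off `⟨⟨⟨⟨x, ⟨T, u⟩⟩, ⟨c, T'⟩⟩, ⟨y, c'⟩⟩, v⟩`. -/
def kannanMatrixSet (k : ℕ) : Set ℕ :=
  {z | KannanMatrix k z.unpair.1.unpair.1.unpair.1.unpair.1
    z.unpair.1.unpair.1.unpair.1.unpair.2.unpair.1 z.unpair.1.unpair.1.unpair.1.unpair.2.unpair.2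
    z.unpair.1.unpair.1.unpair.2.unpair.1 z.unpair.1.unpair.1.unpair.2.unpair.2
    z.unpair.1.unpair.2.unpair.1 z.unpair.1.unpair.2.unpair.2 z.unpair.2}

theorem kannanMatrixSet_mem_Pclass (k : ℕ) : kannanMatrixSet k ∈ Pclass := by
  have hxY : PTF fun z : ℕ => z.unpair.1.unpair.1.unpair.1 :=
    PTF.up1.comp (PTF.up1.comp PTF.up1)
  have hY := PTF.up2.comp hxY
  have hZ : PTF fun z : ℕ => z.unpair.1.unpair.1.unpair.2 :=
    PTF.up2.comp (PTF.up1.comp PTF.up1)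
  have hW : PTF fun z : ℕ => z.unpair.1.unpair.2 := PTF.up2.comp PTF.up1
  exact (PolyTimeDecidable.kannanMatrix k (PTF.up1.comp hxY) (PTF.up1.comp hY) (PTF.up2.comp hY)
    (PTF.up1.comp hZ) (PTF.up2.comp hZ) (PTF.up1.comp hW) (PTF.up2.comp hW) PTF.up2).mem_Pclass

theorem len_le_of_isLargeLength {k x p w : ℕ} (hlarge : IsLargeLength k (len x)) (hxp : x ≤ p)
    (hw : Nat.size w ≤ 4 * tableLength k (len x)) :
    len w ≤ len p ^ witnessExponent k + witnessExponent k :=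
  calc len w ≤ len x ^ witnessExponent k := hw.trans (four_mul_tableLength_le hlarge)
    _ ≤ len p ^ witnessExponent k := Nat.pow_le_pow_left (Nat.size_le_size hxp) _
    _ ≤ _ := Nat.le_add_right _ _

theorem hardLang_eq_boundedExists (k : ℕ) :
    hardLang k = boundedExists (witnessExponent k) (boundedExists (witnessExponent k)
      (boundedExists (witnessExponent k)
        (boundedExists (witnessExponent k) (kannanMatrixSet k)))) := by
  ext x
  rw [mem_boundedExists_four, mem_hardLang_iff_exists_certificate]
  simp only [kannanMatrixSet, Set.mem_ofPred_eq, Nat.unpair_pair]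
  constructor
  · rintro ⟨T, u, hcert⟩
    have hu : Nat.size u < tableLength k (len x) := hcert.2.2.2.1 ▸ Nat.mod_lt x (Nat.two_pow_pos _)
    refine ⟨Nat.pair T u, len_le_of_isLargeLength hcert.1 le_rfl
      ((Nat.size_pair_le T u).trans (by have := hcert.2.1.1; omega)), fun Z _ => ?_⟩
    obtain ⟨y, c', hy, hc', hmatrix⟩ := hcert.exists_response Z.unpair.1 Z.unpair.2
    exact ⟨Nat.pair y c', len_le_of_isLargeLength hcert.1
      ((Nat.left_le_pair _ _).trans (Nat.left_le_pair _ _))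
      ((Nat.size_pair_le y c').trans (by omega)), fun V _ => by simpa using hmatrix V⟩
  · rintro ⟨Y, -, hY⟩
    have hlarge : IsLargeLength k (len x) := by
      obtain ⟨W, -, hW⟩ := hY 0 (by simp [len])
      exact (hW 0 (by simp [len])).1
    refine ⟨Y.unpair.1, Y.unpair.2, isKannanCertificate_of_forall_exists_forall
      fun c T' hc hT' => ?_⟩
    obtain ⟨W, -, hW⟩ := hY (Nat.pair c T') (len_le_of_isLargeLength hlarge (Nat.left_le_pair _ _)
      ((Nat.size_pair_le c T').trans (by omega)))
    refine ⟨W.unpair.1, W.unpair.2, fun v hv => ?_⟩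
    simpa using hW v (len_le_of_isLargeLength hlarge
      (((Nat.left_le_pair _ _).trans (Nat.left_le_pair _ _)).trans (Nat.left_le_pair _ _))
      (by omega))

theorem hardLang_mem_SigmaP (k : ℕ) : hardLang k ∈ SigmaP 4 := by
  rw [hardLang_eq_boundedExists]
  exact boundedExists_mem_SigmaP _ <| boundedExists_mem_SigmaP _ <|
    boundedExists_mem_SigmaP _ <| boundedExists_mem_SigmaP _ (kannanMatrixSet_mem_Pclass k)

theorem PNP_hard_language_of_PH_collapse_general (hcollapse : PHclass ⊆ PNPclass)
    (k : ℕ) :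
    ∃ L ∈ PNPclass, L ∉ ioSIZE (fun n => n ^ k) :=
  ⟨hardLang k, hcollapse ⟨4, hardLang_mem_SigmaP k⟩, hardLang_not_mem_ioSIZE k⟩

/-- If the polynomial hierarchy collapses to `P^NP`, then for every positive integer
`k` there is a language `L ∈ P^NP` with `L ∉ i.o.SIZE[n^k]`, i.e. `L` cannot be
computed by circuits of size `n^k` even on infinitely many input lengths. -/
theorem PNP_hard_language_of_PH_collapse (hcollapse : PHclass ⊆ PNPclass)
    (k : ℕ) (hk : 1 ≤ k) :
    ∃ L ∈ PNPclass, L ∉ ioSIZE (fun n => n ^ k) :=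
  PNP_hard_language_of_PH_collapse_general hcollapse k

end CLB
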